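/- For every d ≥ 1 and every t ∈ ℕ, the Bochner integral of U^{⊗t} ⊗ (U^*)^{⊗t} over the unitary group U(d) with respect to its normalized (probability) Haar measure equals the Bochner integral of W^{⊗t} ⊗ (W^*)^{⊗t} over the special unitary group SU(d) with respect to its normalized (probability) Haar measure. -/

import Mathlib

open Matrix MeasureTheory
open scoped Kronecker

/-- Matrices inherit the (Borel) product measurable structure of functions. -/
noncomputable instance matrixMeasurableSpace (m n : Type*) : MeasurableSpace (Matrix m n ℂ) :=
  inferInstanceAs (MeasurableSpace (m → n → ℂ))

/-- The special unitary group is a group (inverse given by the conjugate transpose). -/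
noncomputable instance specialUnitaryGroup.group {n : Type*} [DecidableEq n] [Fintype n] :
    Group ↥(Matrix.specialUnitaryGroup n ℂ) :=
  { (inferInstance : Monoid ↥(Matrix.specialUnitaryGroup n ℂ)) with
    inv := fun A => ⟨star A.1, by
      obtain ⟨hu, hd⟩ := Matrix.mem_specialUnitaryGroup_iff.mp A.2
      refine Matrix.mem_specialUnitaryGroup_iff.mpr ⟨Unitary.star_mem hu, ?_⟩
      rw [Matrix.star_eq_conjTranspose, Matrix.det_conjTranspose, hd, star_one]⟩
    inv_mul_cancel := fun A => Subtype.ext A.2.1.1 }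

/-- The `t`-fold Kronecker power of a `d × d` complex matrix:
`L^{⊗t}(i,j) = ∏_{s<t} L (i s) (j s)`. -/
noncomputable def kroneckerPow {d : ℕ} (t : ℕ) (L : Matrix (Fin d) (Fin d) ℂ) :
    Matrix (Fin t → Fin d) (Fin t → Fin d) ℂ :=
  fun i j => ∏ s : Fin t, L (i s) (j s)

/-- `L^{⊗t} ⊗ (L^*)^{⊗t}`, the matrix averaged in the definition of a `t`-design. -/
noncomputable def designMat {d : ℕ} (t : ℕ) (L : Matrix (Fin d) (Fin d) ℂ) :
    Matrix ((Fin t → Fin d) × (Fin t → Fin d)) ((Fin t → Fin d) × (Fin t → Fin d)) ℂ :=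
  kroneckerPow t L ⊗ₖ kroneckerPow t (L.map (starRingEnd ℂ))

/-! Every unitary matrix is a phase times a special unitary one: `U = z • W` with `z ^ d = det U`.
Hence `(z, W) ↦ z • W` is a continuous surjective homomorphism `U(1) × SU(d) → U(d)`, which pushes
the product of the Haar probability measures forward to the Haar probability measure of `U(d)`.
The integrand does not see the phase, since `(z • W)^{⊗t} ⊗ ((z • W)^*)^{⊗t}` picks up the factor
`z ^ t * conj z ^ t = 1`; integrating out the `U(1)` factor leaves the integral over `SU(d)`. -/

open scoped ComplexConjugate

instance : CompactSpace (unitary ℂ) :=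
  isCompact_iff_compactSpace.mp <| (isCompact_closedBall (0 : ℂ) 1).of_isClosed_subset
    isClosed_unitary fun _ hu => by simp [CStarRing.norm_of_mem_unitary hu]

theorem Complex.exists_pow_eq_of_mem_unitary {u : ℂ} (hu : u ∈ unitary ℂ) {k : ℕ} (hk : k ≠ 0) :
    ∃ z ∈ unitary ℂ, z ^ k = u := by
  obtain ⟨z, hz⟩ := IsAlgClosed.exists_pow_nat_eq u (Nat.pos_of_ne_zero hk)
  have hz_norm : ‖z‖ = 1 := by
    rw [← pow_eq_one_iff_of_nonneg (norm_nonneg z) hk, ← norm_pow, hz,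
      CStarRing.norm_of_mem_unitary hu]
  refine ⟨z, Unitary.mem_iff_star_mul_self.mpr ?_, hz⟩
  rw [Complex.star_def, Complex.conj_mul', hz_norm]
  norm_num

namespace MeasureTheory

variable {G H E : Type*} [Group G] [TopologicalSpace G] [IsTopologicalGroup G] [MeasurableSpace G]
  [BorelSpace G]

instance isProbabilityMeasure_haarMeasure_top [CompactSpace G] :
    IsProbabilityMeasure (Measure.haarMeasure (⊤ : TopologicalSpace.PositiveCompacts G)) :=
  ⟨by rw [← TopologicalSpace.PositiveCompacts.coe_top, Measure.haarMeasure_self]⟩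

theorem integral_comp_monoidHom_of_surjective [Group H] [TopologicalSpace H]
    [IsTopologicalGroup H] [LocallyCompactSpace H] [MeasurableSpace H] [BorelSpace H]
    [NormedAddCommGroup E] [NormedSpace ℝ E]
    (μ : Measure G) [μ.IsHaarMeasure] [IsProbabilityMeasure μ]
    (ν : Measure H) [ν.IsHaarMeasure] [IsProbabilityMeasure ν]
    (φ : G →* H) (hφ : Continuous φ) (hφ_surj : Function.Surjective φ) {f : H → E}
    (hf : AEStronglyMeasurable f ν) :
    ∫ g, f (φ g) ∂μ = ∫ h, f h ∂ν := by
  have : IsProbabilityMeasure (μ.map φ) := Measure.isProbabilityMeasure_map hφ.aemeasurable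
  have : (μ.map φ).IsHaarMeasure := Measure.isHaarMeasure_map_of_isFiniteMeasure μ φ hφ hφ_surj
  have hν : μ.map φ = ν := Measure.isHaarMeasure_eq_of_isProbabilityMeasure _ _
  rw [← hν] at hf
  rw [← integral_map hφ.aemeasurable hf, hν]

end MeasureTheory

theorem kroneckerPow_smul {d : ℕ} (t : ℕ) (c : ℂ) (L : Matrix (Fin d) (Fin d) ℂ) :
    kroneckerPow t (c • L) = c ^ t • kroneckerPow t L := by
  ext i j
  simp [kroneckerPow, Finset.prod_mul_distrib]

theorem designMat_smul_of_mem_unitary {d : ℕ} (t : ℕ) {c : ℂ} (hc : c ∈ unitary ℂ)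
    (L : Matrix (Fin d) (Fin d) ℂ) : designMat t (c • L) = designMat t L := by
  have hconj : (c • L).map (starRingEnd ℂ) = conj c • L.map (starRingEnd ℂ) := by
    ext i j
    simp
  have hc' : c * conj c = 1 := Unitary.mul_star_self_of_mem hc
  rw [designMat, designMat, hconj, kroneckerPow_smul, kroneckerPow_smul, smul_kronecker,
    kronecker_smul, smul_smul, ← mul_pow, hc', one_pow, one_smul]

theorem continuous_designMat_apply {d : ℕ} (t : ℕ) (p q : (Fin t → Fin d) × (Fin t → Fin d)) :
    Continuous fun L : Matrix (Fin d) (Fin d) ℂ => designMat t L p q :=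
  (continuous_finsetProd _ fun _ _ => continuous_id.matrix_elem _ _).mul
    (continuous_finsetProd _ fun _ _ => (continuous_id.matrix_elem _ _).star)

namespace Matrix

variable {n : Type*} [Fintype n] [DecidableEq n]

instance : BorelSpace (Matrix n n ℂ) := inferInstanceAs (BorelSpace (n → n → ℂ))

instance : SecondCountableTopology (Matrix n n ℂ) :=
  inferInstanceAs (SecondCountableTopology (n → n → ℂ))

instance : SecondCountableTopology (specialUnitaryGroup n ℂ) :=
  inferInstanceAs (SecondCountableTopology (specialUnitaryGroup n ℂ : Set (Matrix n n ℂ)))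

instance : IsTopologicalGroup (specialUnitaryGroup n ℂ) where
  continuous_inv := (continuous_star.comp continuous_subtype_val).subtype_mk _

theorem isCompact_unitaryGroup : IsCompact (unitaryGroup n ℂ : Set (Matrix n n ℂ)) :=
  (isCompact_univ_pi fun _ => isCompact_univ_pi fun _ => isCompact_closedBall (0 : ℂ) 1)
    |>.of_isClosed_subset (isClosed_unitary (R := Matrix n n ℂ)) fun _ hU => by
      simpa [Set.mem_univ_pi] using entry_norm_bound_of_unitary hU

theorem isCompact_specialUnitaryGroup :
    IsCompact (specialUnitaryGroup n ℂ : Set (Matrix n n ℂ)) :=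
  isCompact_unitaryGroup.inter_right (isClosed_eq continuous_id.matrix_det continuous_const)

instance : CompactSpace (unitaryGroup n ℂ) :=
  isCompact_iff_compactSpace.mp isCompact_unitaryGroup

instance : CompactSpace (specialUnitaryGroup n ℂ) :=
  isCompact_iff_compactSpace.mp isCompact_specialUnitaryGroup

variable (n) in
def unitarySMulSpecialUnitaryHom : unitary ℂ × specialUnitaryGroup n ℂ →* unitaryGroup n ℂ where
  toFun p := p.1 • (⟨p.2, p.2.2.1⟩ : unitaryGroup n ℂ)
  map_one' := Subtype.ext (one_smul ℂ _)
  map_mul' p q :=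
    Subtype.ext (smul_mul_smul_comm (p.1 : ℂ) (p.2 : Matrix n n ℂ) (q.1 : ℂ) q.2).symm

@[simp]
theorem coe_unitarySMulSpecialUnitaryHom (p : unitary ℂ × specialUnitaryGroup n ℂ) :
    (unitarySMulSpecialUnitaryHom n p : Matrix n n ℂ) = (p.1 : ℂ) • (p.2 : Matrix n n ℂ) := rfl

theorem continuous_unitarySMulSpecialUnitaryHom : Continuous (unitarySMulSpecialUnitaryHom n) :=
  ((continuous_subtype_val.comp continuous_fst).smul
    (continuous_subtype_val.comp continuous_snd)).subtype_mk _

theorem unitarySMulSpecialUnitaryHom_surjective [Nonempty n] :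
    Function.Surjective (unitarySMulSpecialUnitaryHom n) := by
  intro U
  have hdet := det_of_mem_unitary U.2
  obtain ⟨z, hz, hz_pow⟩ :=
    Complex.exists_pow_eq_of_mem_unitary hdet (k := Fintype.card n) Fintype.card_ne_zero
  have hW : star z • (U : Matrix n n ℂ) ∈ specialUnitaryGroup n ℂ := by
    refine mem_specialUnitaryGroup_iff.mpr ⟨Unitary.smul_mem_of_mem (Unitary.star_mem hz) U.2, ?_⟩
    rw [det_smul, ← star_pow, hz_pow, Unitary.star_mul_self_of_mem hdet]
  refine ⟨(⟨z, hz⟩, ⟨_, hW⟩), Subtype.ext ?_⟩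
  rw [coe_unitarySMulSpecialUnitaryHom, smul_smul, Unitary.mul_star_self_of_mem hz, one_smul]

end Matrix

/-- The (entrywise Bochner) integral of `U^{⊗t} ⊗ (U^*)^{⊗t}` over `U(d)`
with respect to its normalized Haar (probability) measure equals the corresponding integral
of `W^{⊗t} ⊗ (W^*)^{⊗t}` over `SU(d)` with respect to its normalized Haar measure. -/
theorem integral_design_unitary_eq_specialUnitary (d : ℕ) (hd : 1 ≤ d) (t : ℕ)
    (μ : Measure ↥(Matrix.unitaryGroup (Fin d) ℂ))
    [μ.IsHaarMeasure] [IsProbabilityMeasure μ]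
    (ν : Measure ↥(Matrix.specialUnitaryGroup (Fin d) ℂ))
    [ν.IsHaarMeasure] [IsProbabilityMeasure ν]
    (p q : (Fin t → Fin d) × (Fin t → Fin d)) :
    ∫ U : ↥(Matrix.unitaryGroup (Fin d) ℂ),
        designMat t (U : Matrix (Fin d) (Fin d) ℂ) p q ∂μ =
      ∫ W : ↥(Matrix.specialUnitaryGroup (Fin d) ℂ),
        designMat t (W : Matrix (Fin d) (Fin d) ℂ) p q ∂ν := by
  have : Nonempty (Fin d) := Fin.pos_iff_nonempty.mp hd
  let κ := Measure.haarMeasure (⊤ : TopologicalSpace.PositiveCompacts (unitary ℂ))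
  calc ∫ U : unitaryGroup (Fin d) ℂ, designMat t (U : Matrix (Fin d) (Fin d) ℂ) p q ∂μ
      = ∫ r, designMat t (unitarySMulSpecialUnitaryHom (Fin d) r : Matrix (Fin d) (Fin d) ℂ) p q
          ∂(κ.prod ν) :=
        (integral_comp_monoidHom_of_surjective _ μ _ continuous_unitarySMulSpecialUnitaryHom
          unitarySMulSpecialUnitaryHom_surjective
          ((continuous_designMat_apply t p q).comp continuous_subtype_val).aestronglyMeasurable).symm
    _ = ∫ r : unitary ℂ × specialUnitaryGroup (Fin d) ℂ,
          designMat t (r.2 : Matrix (Fin d) (Fin d) ℂ) p q ∂(κ.prod ν) := by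
        simp only [coe_unitarySMulSpecialUnitaryHom,
          designMat_smul_of_mem_unitary t (Subtype.prop _)]
    _ = ∫ W : specialUnitaryGroup (Fin d) ℂ, designMat t (W : Matrix (Fin d) (Fin d) ℂ) p q ∂ν := by
        rw [integral_fun_snd fun W : specialUnitaryGroup (Fin d) ℂ => designMat t W.1 p q,
          probReal_univ, one_smul]
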